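/- If f is an octonion-valued monogenic C² function on a domain Ω ⊆ ℝ⁸, then |f|^p is subharmonic on Ω for every p ≥ 6/7 (on the set where f ≠ 0). -/

import Mathlib

/-!
Write `s = |f|²`. For `s > 0` the chain rule gives
`Δ (s ^ (p/2)) = p s^(p/2 - 2) ((p - 2) |f·∇f|² + s (|∇f|² + f·Δf))`, where
`(f·∇f)_k = ∑_j f_j ∂_k f_j`. Applying the conjugate operator `∑_i ē_i ∂_i` to `D[f] = 0` and using
`ē_i (e_a x) + ē_a (e_i x) = 2 δ_ia x` shows that `D̄ D = Δ`, so every component of a monogenic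
`f` is harmonic and `f·Δf = 0`. It then suffices to show the Stein–Weiss inequality
`8 |f·∇f|² ≤ 7 |f|² |∇f|²` whenever `∑_a e_a ∂_a f = 0`, which with `p - 2 ≥ -8/7` makes the
bracket nonnegative.
-/

open scoped BigOperators

/-- Octonion multiplication table: `octTable i j = (s, k)` means `e_i * e_j = s • e_k`. -/
def octTable : Fin 8 → Fin 8 → ℝ × Fin 8 :=
  ![![(1,0),(1,1),(1,2),(1,3),(1,4),(1,5),(1,6),(1,7)],
    ![(1,1),(-1,0),(1,4),(1,7),(-1,2),(1,6),(-1,5),(-1,3)],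
    ![(1,2),(-1,4),(-1,0),(1,5),(1,1),(-1,3),(1,7),(-1,6)],
    ![(1,3),(-1,7),(-1,5),(-1,0),(1,6),(1,2),(-1,4),(1,1)],
    ![(1,4),(1,2),(-1,1),(-1,6),(-1,0),(1,7),(1,3),(-1,5)],
    ![(1,5),(-1,6),(1,3),(-1,2),(-1,7),(-1,0),(1,1),(1,4)],
    ![(1,6),(1,5),(-1,7),(1,4),(-1,3),(-1,1),(-1,0),(1,2)],
    ![(1,7),(1,3),(1,6),(-1,1),(1,5),(-1,4),(-1,2),(-1,0)]]

/-- The octonion `e_i * e_j`, as an element of `ℝ⁸`. -/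
def octBasisMul (i j : Fin 8) : Fin 8 → ℝ :=
  fun k => if k = (octTable i j).2 then (octTable i j).1 else 0

/-- Octonion multiplication on `ℝ⁸`, extended bilinearly from the table. -/
def omul (x y : Fin 8 → ℝ) : Fin 8 → ℝ :=
  fun k => ∑ i : Fin 8, ∑ j : Fin 8, x i * y j * octBasisMul i j k

/-- The basis octonion `e_i`. -/
def octE (i : Fin 8) : Fin 8 → ℝ := fun j => if j = i then 1 else 0

/-- Partial derivative `∂g/∂x_k` of a real-valued function on `ℝ⁸`. -/
noncomputable def pderiv8 (g : EuclideanSpace ℝ (Fin 8) → ℝ) (k : Fin 8)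
    (x : EuclideanSpace ℝ (Fin 8)) : ℝ :=
  fderiv ℝ g x (EuclideanSpace.single k 1)

/-- The Cauchy–Riemann–Fueter (Dirac) operator `D[f] = ∑_j e_j (∂f/∂x_j)`
on octonion-valued functions, with octonion multiplication of basis elements:
the `e_m`-component of `D[f](x)` is `∑_j ∑_k (∂f_k/∂x_j)(x) · (e_j e_k)_m`. -/
noncomputable def CRF (f : EuclideanSpace ℝ (Fin 8) → Fin 8 → ℝ)
    (x : EuclideanSpace ℝ (Fin 8)) : Fin 8 → ℝ :=
  fun m => ∑ j : Fin 8, ∑ k : Fin 8, pderiv8 (fun y => f y k) j x * octBasisMul j k m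

open Filter Topology

section DirectionalDerivatives

variable {E F : Type*} [NormedAddCommGroup E] [NormedSpace ℝ E]
  [NormedAddCommGroup F] [NormedSpace ℝ F]

theorem ContDiffAt.differentiableAt_fderiv_apply {g : E → F} {x : E} (hg : ContDiffAt ℝ 2 g x)
    (v : E) : DifferentiableAt ℝ (fun y => fderiv ℝ g y v) x :=
  ((hg.fderiv_right (m := 1) (by norm_num)).clm_apply contDiffAt_const).differentiableAt
    one_ne_zero

theorem ContDiffAt.fderiv_fderiv_apply_comm {g : E → F} {x : E} (hg : ContDiffAt ℝ 2 g x)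
    (v w : E) :
    fderiv ℝ (fun y => fderiv ℝ g y v) x w = fderiv ℝ (fun y => fderiv ℝ g y w) x v := by
  have hd : DifferentiableAt ℝ (fderiv ℝ g) x :=
    (hg.fderiv_right (m := 1) (by norm_num)).differentiableAt one_ne_zero
  rw [fderiv_clm_apply hd (differentiableAt_const v),
    fderiv_clm_apply hd (differentiableAt_const w)]
  simpa using hg.isSymmSndFDerivAt (by simp [minSmoothness_of_isRCLikeNormedField]) w v

theorem fderiv_fderiv_rpow_apply {s : E → ℝ} {x : E} (hs : ContDiffAt ℝ 2 s x) (hx : 0 < s x)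
    (q : ℝ) (v : E) :
    fderiv ℝ (fun y => fderiv ℝ (fun z => s z ^ q) y v) x v =
      q * s x ^ (q - 2) *
        ((q - 1) * fderiv ℝ s x v ^ 2 + s x * fderiv ℝ (fun y => fderiv ℝ s y v) x v) := by
  have hfirst : (fun y => fderiv ℝ (fun z => s z ^ q) y v) =ᶠ[𝓝 x]
      fun y => q * s y ^ (q - 1) * fderiv ℝ s y v := by
    filter_upwards [hs.eventually (by simp), hs.continuousAt.eventually (lt_mem_nhds hx)]
      with y hy hpos
    rw [((hy.differentiableAt two_ne_zero).hasFDerivAt.rpow_const (.inl hpos.ne')).fderiv]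
    simp [mul_assoc]
  have hpow := ((hs.differentiableAt two_ne_zero).hasFDerivAt.rpow_const (p := q - 1)
    (.inl hx.ne')).const_mul q
  rw [hfirst.fderiv_eq, (hpow.fun_mul (hs.differentiableAt_fderiv_apply v).hasFDerivAt).fderiv]
  have hsplit : s x ^ (q - 1) = s x ^ (q - 2) * s x := by
    rw [← Real.rpow_add_one hx.ne']; ring_nf
  simp [hsplit, show q - 1 - 1 = q - 2 by ring]
  ring

variable {ι : Type*} [Fintype ι]

theorem fderiv_sum_sq_apply {f : E → ι → ℝ} {x : E} (hf : DifferentiableAt ℝ f x) (v : E) :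
    fderiv ℝ (fun z => ∑ j, f z j ^ 2) x v = 2 * ∑ j, f x j * fderiv ℝ (fun z => f z j) x v := by
  have hj : ∀ j, HasFDerivAt (fun z => f z j) (fderiv ℝ (fun z => f z j) x) x := fun j =>
    (differentiableAt_pi.1 hf j).hasFDerivAt
  rw [(HasFDerivAt.fun_sum fun j _ => (hj j).pow 2).fderiv]
  simp only [sum_apply, FunLike.coe_smul, Pi.smul_apply, smul_eq_mul, Finset.mul_sum]
  exact Finset.sum_congr rfl fun j _ => by ring

theorem fderiv_fderiv_sum_sq_apply {f : E → ι → ℝ} {x : E} (hf : ContDiffAt ℝ 2 f x) (v : E) :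
    fderiv ℝ (fun y => fderiv ℝ (fun z => ∑ j, f z j ^ 2) y v) x v =
      2 * ∑ j, (fderiv ℝ (fun z => f z j) x v ^ 2 +
        f x j * fderiv ℝ (fun y => fderiv ℝ (fun z => f z j) y v) x v) := by
  have hfirst : (fun y => fderiv ℝ (fun z => ∑ j, f z j ^ 2) y v) =ᶠ[𝓝 x]
      fun y => 2 * ∑ j, f y j * fderiv ℝ (fun z => f z j) y v := by
    filter_upwards [hf.eventually (by simp)] with y hy
    exact fderiv_sum_sq_apply (hy.differentiableAt two_ne_zero) v
  have hj : ∀ j, ContDiffAt ℝ 2 (fun z => f z j) x := contDiffAt_pi.1 hf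
  have hprod : ∀ j, HasFDerivAt (fun y => f y j * fderiv ℝ (fun z => f z j) y v) _ x := fun j =>
    ((hj j).differentiableAt two_ne_zero).hasFDerivAt.mul
      ((hj j).differentiableAt_fderiv_apply v).hasFDerivAt
  rw [hfirst.fderiv_eq, ((HasFDerivAt.fun_sum fun j _ => hprod j).const_mul 2).fderiv]
  simp [sq, add_comm]

theorem sum_sq_pos_of_ne_zero {u : ι → ℝ} (hu : u ≠ 0) : 0 < ∑ j, u j ^ 2 := by
  obtain ⟨j, hj⟩ := Function.ne_iff.1 hu
  exact Finset.sum_pos' (fun i _ => sq_nonneg _) ⟨j, Finset.mem_univ _, pow_two_pos_of_ne_zero hj⟩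

theorem fderiv_fderiv_sum_sq_rpow_apply {f : E → ι → ℝ} {x : E} (hf : ContDiffAt ℝ 2 f x)
    (hx : f x ≠ 0) (p : ℝ) (v : E) :
    fderiv ℝ (fun y => fderiv ℝ (fun z => (∑ j, f z j ^ 2) ^ (p / 2)) y v) x v =
      p * (∑ j, f x j ^ 2) ^ (p / 2 - 2) *
        ((p - 2) * (∑ j, f x j * fderiv ℝ (fun z => f z j) x v) ^ 2 +
          (∑ j, f x j ^ 2) * ∑ j, (fderiv ℝ (fun z => f z j) x v ^ 2 +
            f x j * fderiv ℝ (fun y => fderiv ℝ (fun z => f z j) y v) x v)) := by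
  have hs : ContDiffAt ℝ 2 (fun z => ∑ j, f z j ^ 2) x :=
    ContDiffAt.sum fun j _ => (contDiffAt_pi.1 hf j).pow 2
  rw [fderiv_fderiv_rpow_apply hs (sum_sq_pos_of_ne_zero hx),
    fderiv_sum_sq_apply (hf.differentiableAt two_ne_zero), fderiv_fderiv_sum_sq_apply hf]
  ring

end DirectionalDerivatives

def octConjSign (i : Fin 8) : ℝ := if i = 0 then 1 else -1

theorem sum_sq_omul (t u : Fin 8 → ℝ) :
    ∑ m, omul t u m ^ 2 = (∑ k, t k ^ 2) * ∑ j, u j ^ 2 := by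
  simp [omul, Fin.sum_univ_eight, octBasisMul, octTable]; ring

theorem sum_sq_sum_mul_octBasisMul (v : Fin 8 → ℝ) :
    ∑ k, ∑ j, (∑ m, v m * octBasisMul k j m) ^ 2 = 8 * ∑ m, v m ^ 2 := by
  simp [Fin.sum_univ_eight, octBasisMul, octTable]; ring

set_option maxHeartbeats 1000000 in
theorem octConj_dirac_symm_eq_sum_diag (H : Fin 8 → Fin 8 → Fin 8 → ℝ) (l : Fin 8) :
    ∑ i, ∑ m, octConjSign i * octBasisMul i m l *
        ∑ a, ∑ b, (H i a b + H a i b) / 2 * octBasisMul a b m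
      = ∑ i, H i i l := by
  fin_cases l <;> (simp [Fin.sum_univ_eight, octBasisMul, octTable, octConjSign]; ring)

theorem sum_diag_eq_zero_of_dirac_eq_zero (H : Fin 8 → Fin 8 → Fin 8 → ℝ)
    (hsymm : ∀ i a b, H i a b = H a i b)
    (hD : ∀ i m, ∑ a, ∑ b, H i a b * octBasisMul a b m = 0) (l : Fin 8) :
    ∑ i, H i i l = 0 := by
  rw [← octConj_dirac_symm_eq_sum_diag]
  refine Finset.sum_eq_zero fun i _ => Finset.sum_eq_zero fun m _ => ?_
  have hhalf : ∀ a b, (H i a b + H a i b) / 2 = H i a b := fun a b => by rw [← hsymm]; ring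
  simp only [hhalf, hD, mul_zero]

theorem sum_sum_sum_mul_comm {κ μ : Type*} [Fintype κ] [Fintype μ] (v : μ → ℝ)
    (c : κ → κ → μ → ℝ) (B : κ → κ → ℝ) :
    ∑ k, ∑ j, (∑ m, v m * c k j m) * B k j = ∑ m, v m * ∑ k, ∑ j, B k j * c k j m := by
  simp only [Finset.sum_mul, Finset.mul_sum]
  conv_rhs => rw [Finset.sum_comm]
  refine Finset.sum_congr rfl fun k _ => ?_
  conv_rhs => rw [Finset.sum_comm]
  exact Finset.sum_congr rfl fun j _ => Finset.sum_congr rfl fun m _ => by ring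

/- With `t = A u`, put `D = t ⊗ u - ⟨t u, e_k e_j⟩ / 8`. The correction term is orthogonal to
`A` by `hA`, so `⟨D, A⟩ = |t|²`; `|t u| = |t| |u|` and the orthogonality of the left
multiplications `x ↦ e_k x` give `|D|² = 7/8 |t|² |u|²`, and Cauchy–Schwarz concludes. -/
theorem octonion_stein_weiss (u : Fin 8 → ℝ) (A : Fin 8 → Fin 8 → ℝ)
    (hA : ∀ m, ∑ a, ∑ b, A a b * octBasisMul a b m = 0) :
    8 * ∑ k, (∑ j, u j * A k j) ^ 2 ≤ 7 * (∑ j, u j ^ 2) * ∑ k, ∑ j, A k j ^ 2 := by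
  set t : Fin 8 → ℝ := fun k => ∑ j, u j * A k j
  set T := ∑ k, t k ^ 2
  set S := ∑ j, u j ^ 2
  set F := ∑ k, ∑ j, A k j ^ 2
  set r := omul t u
  set D : Fin 8 → Fin 8 → ℝ := fun k j => t k * u j - (∑ m, r m * octBasisMul k j m) / 8
  have htu : ∀ B : Fin 8 → Fin 8 → ℝ,
      ∑ k, ∑ j, t k * u j * B k j = ∑ k, t k * ∑ j, u j * B k j := fun B =>
    Finset.sum_congr rfl fun k _ => by rw [Finset.mul_sum]; simp only [mul_assoc]
  have hDA : ∑ k, ∑ j, D k j * A k j = T := by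
    simp only [D, sub_mul, div_mul_eq_mul_div, Finset.sum_sub_distrib, ← Finset.sum_div,
      sum_sum_sum_mul_comm, hA, mul_zero, Finset.sum_const_zero, zero_div, sub_zero, htu]
    exact Finset.sum_congr rfl fun k _ => (sq (t k)).symm
  have hDD : ∑ k, ∑ j, D k j ^ 2 = 7 / 8 * (T * S) := by
    have hexpand : ∀ k j, D k j ^ 2 = (t k * u j) ^ 2
        - (∑ m, r m * octBasisMul k j m) * (t k * u j) / 4
        + (∑ m, r m * octBasisMul k j m) ^ 2 / 64 := fun k j => by simp only [D]; ring
    have hPP : ∑ k, ∑ j, (t k * u j) ^ 2 = T * S := by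
      simp only [mul_pow, ← Finset.mul_sum, ← Finset.sum_mul, T, S]
    have hPQ : ∑ k, ∑ j, (∑ m, r m * octBasisMul k j m) * (t k * u j) = T * S := by
      rw [sum_sum_sum_mul_comm, ← sum_sq_omul]
      exact Finset.sum_congr rfl fun m _ => by simp only [r, omul, sq]
    simp only [hexpand, Finset.sum_add_distrib, Finset.sum_sub_distrib, ← Finset.sum_div, hPP,
      hPQ, sum_sq_sum_mul_octBasisMul, r, sum_sq_omul]
    ring
  have hCS : (∑ k, ∑ j, D k j * A k j) ^ 2 ≤ (∑ k, ∑ j, D k j ^ 2) * F := by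
    simpa [Fintype.sum_prod_type] using
      Finset.sum_mul_sq_le_sq_mul_sq Finset.univ (fun q : Fin 8 × Fin 8 => D q.1 q.2)
        (fun q => A q.1 q.2)
  rw [hDA, hDD] at hCS
  have hS : 0 ≤ S := Finset.sum_nonneg fun j _ => sq_nonneg _
  have hF : 0 ≤ F := Finset.sum_nonneg fun k _ => Finset.sum_nonneg fun j _ => sq_nonneg _
  have hT : 0 ≤ T := Finset.sum_nonneg fun k _ => sq_nonneg _
  rcases hT.eq_or_lt with hT | hT
  · nlinarith [mul_nonneg hS hF]
  · nlinarith

section Monogenic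

variable {Ω : Set (EuclideanSpace ℝ (Fin 8))} {f : EuclideanSpace ℝ (Fin 8) → Fin 8 → ℝ}
  {x : EuclideanSpace ℝ (Fin 8)}

theorem sum_pderiv8_pderiv8_eq_zero_of_CRF_eq_zero (hΩ : IsOpen Ω) (hf : ContDiffOn ℝ 2 f Ω)
    (hmono : ∀ y ∈ Ω, CRF f y = 0) (hx : x ∈ Ω) (l : Fin 8) :
    ∑ i, pderiv8 (fun y => pderiv8 (fun z => f z l) i y) i x = 0 := by
  have hj : ∀ b, ContDiffAt ℝ 2 (fun z => f z b) x :=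
    contDiffAt_pi.1 (hf.contDiffAt (hΩ.mem_nhds hx))
  refine sum_diag_eq_zero_of_dirac_eq_zero
    (fun i a b => pderiv8 (fun y => pderiv8 (fun z => f z b) a y) i x)
    (fun i a b => (hj b).fderiv_fderiv_apply_comm _ _) (fun i m => ?_) l
  have hderiv : HasFDerivAt (fun y => CRF f y m) (∑ a, ∑ b, octBasisMul a b m •
      fderiv ℝ (fun y => pderiv8 (fun z => f z b) a y) x) x :=
    HasFDerivAt.fun_sum fun a _ => HasFDerivAt.fun_sum fun b _ =>
      ((hj b).differentiableAt_fderiv_apply _).hasFDerivAt.mul_const _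
  have hzero : HasFDerivAt (fun y => CRF f y m) 0 x :=
    (hasFDerivAt_const (𝕜 := ℝ) (0 : ℝ) x).congr_of_eventuallyEq <| by
      filter_upwards [hΩ.mem_nhds hx] with y hy
      rw [hmono y hy, Pi.zero_apply]
  simpa [pderiv8, mul_comm] using
    congrArg (fun L => L (EuclideanSpace.single i 1)) (hderiv.unique hzero)

theorem sum_pderiv8_pderiv8_sqrt_sum_sq_rpow_of_CRF_eq_zero (hΩ : IsOpen Ω)
    (hf : ContDiffOn ℝ 2 f Ω) (hmono : ∀ y ∈ Ω, CRF f y = 0) (hx : x ∈ Ω) (hfx : f x ≠ 0)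
    (p : ℝ) :
    ∑ k, pderiv8 (fun y => pderiv8 (fun z => √(∑ j, f z j ^ 2) ^ p) k y) k x =
      p * (∑ j, f x j ^ 2) ^ (p / 2 - 2) *
        ((p - 2) * ∑ k, (∑ j, f x j * pderiv8 (fun z => f z j) k x) ^ 2 +
          (∑ j, f x j ^ 2) * ∑ k, ∑ j, pderiv8 (fun z => f z j) k x ^ 2) := by
  have hpow : (fun z => √(∑ j, f z j ^ 2) ^ p) = fun z => (∑ j, f z j ^ 2) ^ (p / 2) :=
    funext fun z => (Real.rpow_div_two_eq_sqrt p (Finset.sum_nonneg fun j _ => sq_nonneg _)).symm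
  have hlap : ∑ k, ∑ j, f x j * pderiv8 (fun y => pderiv8 (fun z => f z j) k y) k x = 0 := by
    rw [Finset.sum_comm]
    simp [← Finset.mul_sum, sum_pderiv8_pderiv8_eq_zero_of_CRF_eq_zero hΩ hf hmono hx]
  simp only [pderiv8] at hlap ⊢
  simp only [hpow, fderiv_fderiv_sum_sq_rpow_apply (hf.contDiffAt (hΩ.mem_nhds hx)) hfx,
    ← Finset.mul_sum, Finset.sum_add_distrib, hlap, add_zero]

end Monogenic

/-- **Subharmonicity of `|f|^p` for octonionic monogenic functions.** If `f` is a
monogenic C² octonion-valued function on a domain `Ω ⊆ ℝ⁸`, then for every `p ≥ 6/7` the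
function `|f|^p = (∑_j f_j²)^{p/2}` is subharmonic on the set where `f ≠ 0`:
its Laplacian is nonnegative there. -/
theorem monogenic_abs_pow_subharmonic
    (Ω : Set (EuclideanSpace ℝ (Fin 8))) (hΩ : IsOpen Ω)
    (f : EuclideanSpace ℝ (Fin 8) → Fin 8 → ℝ)
    (hf : ContDiffOn ℝ 2 f Ω)
    (hmono : ∀ x ∈ Ω, CRF f x = 0)
    (p : ℝ) (hp : (6 : ℝ) / 7 ≤ p) :
    ∀ x ∈ Ω, f x ≠ 0 →
      0 ≤ ∑ k : Fin 8,
        pderiv8 (fun y => pderiv8 (fun z => Real.sqrt (∑ j : Fin 8, f z j ^ 2) ^ p) k y) k x := by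
  intro x hx hfx
  rw [sum_pderiv8_pderiv8_sqrt_sum_sq_rpow_of_CRF_eq_zero hΩ hf hmono hx hfx]
  have hSW := octonion_stein_weiss (f x) (fun a b => pderiv8 (fun z => f z b) a x)
    (congrFun (hmono x hx))
  have hs : 0 ≤ ∑ j, f x j ^ 2 := Finset.sum_nonneg fun j _ => sq_nonneg _
  have hT : 0 ≤ ∑ k, (∑ j, f x j * pderiv8 (fun z => f z j) k x) ^ 2 :=
    Finset.sum_nonneg fun k _ => sq_nonneg _
  refine mul_nonneg (mul_nonneg (by linarith) (Real.rpow_nonneg hs _)) ?_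
  nlinarith [mul_nonneg (sub_nonneg.2 hp) hT]
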